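/- arXiv:1601.05303 — 3 statements merged into one kernel-verified Lean document; each statement's English description precedes it below -/
import Mathlib

section
/- The function Θ(x,ω) = sinc(x·ω) on ℝ^{2d} (defined as sin(π x·ω)/(π x·ω) for x·ω ≠ 0 and 1 otherwise) does not belong to L^p(ℝ^{2d}) for any 1 ≤ p < ∞. -/
open Real MeasureTheory
open scoped RealInnerProductSpace ENNReal

/-- `sinc t = sin (π t) / (π t)` for `t ≠ 0`, and `sinc 0 = 1`. -/
noncomputable def sinc (t : ℝ) : ℝ := if t = 0 then 1 else Real.sin (π * t) / (π * t)

lemma sinc_neg (t : ℝ) : _root_.sinc (-t) = _root_.sinc t := by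
  unfold _root_.sinc
  rcases eq_or_ne t 0 with rfl | ht
  · simp
  · rw [if_neg (neg_ne_zero.2 ht), if_neg ht, mul_neg, Real.sin_neg, neg_div_neg_eq]

lemma half_le_sinc_of {t : ℝ} (h0 : 0 ≤ t) (h1 : t ≤ 1/2) : 1/2 ≤ _root_.sinc t := by
  rcases eq_or_lt_of_le h0 with rfl | h0'
  · simp only [_root_.sinc, if_pos rfl]; norm_num
  · have hπt : 0 < π * t := by positivity
    have hle : π * t ≤ π / 2 := by nlinarith [Real.pi_pos]
    have hs : 2 / π * (π * t) ≤ Real.sin (π * t) := Real.mul_le_sin hπt.le hle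
    have hdiv : 2 / π ≤ Real.sin (π * t) / (π * t) := by
      rw [le_div_iff₀ hπt]; linarith
    have h2 : (1:ℝ)/2 ≤ 2 / π := by
      rw [div_le_div_iff₀ two_pos Real.pi_pos]; nlinarith [Real.pi_le_four]
    rw [_root_.sinc, if_neg h0'.ne']
    linarith

lemma half_le_sinc {t : ℝ} (ht : |t| ≤ 1/2) : 1/2 ≤ _root_.sinc t := by
  rcases le_total 0 t with h0 | h0
  · exact half_le_sinc_of h0 (by rwa [abs_of_nonneg h0] at ht)
  · rw [← _root_.sinc_neg]
    exact half_le_sinc_of (by linarith) (by rwa [abs_of_nonpos h0] at ht)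

/-- The function `Θ(x,ω) = sinc (x ⬝ ω)` on `ℝ^{2d}` does not belong to
`L^p(ℝ^{2d})` for any `1 ≤ p < ∞`. -/
theorem stmt_0 (d : ℕ) (hd : 0 < d) (p : ℝ≥0∞) (hp : 1 ≤ p) (hp' : p ≠ ⊤) :
    ¬ MemLp (fun z : EuclideanSpace ℝ (Fin d) × EuclideanSpace ℝ (Fin d) =>
        _root_.sinc ⟪z.1, z.2⟫) p (volume) := by
  intro h
  haveI : Nonempty (Fin d) := ⟨⟨0, hd⟩⟩
  haveI : Nontrivial (EuclideanSpace ℝ (Fin d)) := inferInstance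
  have hp0 : p ≠ 0 := (zero_lt_one.trans_le hp).ne'
  have hcheb : volume {z : EuclideanSpace ℝ (Fin d) × EuclideanSpace ℝ (Fin d) | (1/2 : NNReal) ≤ ‖_root_.sinc ⟪z.1, z.2⟫‖₊} < ∞ :=
    h.meas_ge_lt_top hp0 hp' (by norm_num)
  set S : Set (EuclideanSpace ℝ (Fin d) × EuclideanSpace ℝ (Fin d)) := {z : EuclideanSpace ℝ (Fin d) × EuclideanSpace ℝ (Fin d) | (1/2 : NNReal) ≤ ‖_root_.sinc ⟪z.1, z.2⟫‖₊} with hS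
  -- disjoint annulus × ball pieces inside S
  set A : ℕ → Set (EuclideanSpace ℝ (Fin d) × EuclideanSpace ℝ (Fin d)) := fun n =>
    (Metric.ball (0 : EuclideanSpace ℝ (Fin d)) (2^(n+1)) \ Metric.ball (0 : EuclideanSpace ℝ (Fin d)) (2^n)) ×ˢ
      Metric.closedBall (0 : EuclideanSpace ℝ (Fin d)) ((2:ℝ)^(n+2))⁻¹ with hA
  have hAS : ∀ n, A n ⊆ S := by
    intro n z hz
    obtain ⟨⟨hz1, -⟩, hz2⟩ := hz
    rw [Metric.mem_ball, dist_zero_right] at hz1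
    rw [Metric.mem_closedBall, dist_zero_right] at hz2
    have hinner : |⟪z.1, z.2⟫| ≤ 1/2 := by
      calc |⟪z.1, z.2⟫| ≤ ‖z.1‖ * ‖z.2‖ := abs_real_inner_le_norm _ _
        _ ≤ 2^(n+1) * ((2:ℝ)^(n+2))⁻¹ :=
            mul_le_mul hz1.le hz2 (norm_nonneg _) (by positivity)
        _ = 1/2 := by
            rw [pow_succ (2:ℝ) (n+1), mul_inv, ← mul_assoc,
              mul_inv_cancel₀ (by positivity)]
            norm_num
    have hge := half_le_sinc hinner
    simp only [hS, Set.mem_setOf_eq]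
    rw [← NNReal.coe_le_coe, coe_nnnorm, Real.norm_eq_abs]
    calc ((1/2 : NNReal) : ℝ) = 1/2 := by norm_num
      _ ≤ _root_.sinc ⟪z.1, z.2⟫ := hge
      _ ≤ |_root_.sinc ⟪z.1, z.2⟫| := le_abs_self _
  have hAmeas : ∀ n, MeasurableSet (A n) := fun n =>
    (measurableSet_ball.diff measurableSet_ball).prod measurableSet_closedBall
  have hdisj : Pairwise (Function.onFun Disjoint A) := by
    intro m n hmn
    wlog hlt : m < n generalizing m n
    · exact (this hmn.symm (by omega)).symm
    refine Set.disjoint_left.2 ?_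
    rintro z ⟨⟨hz1, -⟩, -⟩ ⟨⟨-, hz2⟩, -⟩
    rw [Metric.mem_ball, dist_zero_right] at hz1
    apply hz2
    rw [Metric.mem_ball, dist_zero_right]
    calc ‖z.1‖ < 2^(m+1) := hz1
      _ ≤ 2^n := pow_le_pow_right₀ one_le_two (by omega)
  set dd := Module.finrank ℝ (EuclideanSpace ℝ (Fin d)) with hdd
  set κ := volume (Metric.ball (0 : EuclideanSpace ℝ (Fin d)) 1) with hκ
  have hκpos : 0 < κ := Metric.measure_ball_pos _ _ one_pos
  set c0 : ℝ≥0∞ := ENNReal.ofReal ((1/8:ℝ)^dd) * κ * κ with hc0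
  have hlow : ∀ n, c0 ≤ volume (A n) := by
    intro n
    set r : ℝ := 2^n / 2 with hr0
    set r' : ℝ := ((2:ℝ)^(n+2))⁻¹ with hr'0
    have hr : (0:ℝ) < r := by positivity
    have hr' : (0:ℝ) < r' := by positivity
    set c : EuclideanSpace ℝ (Fin d) := EuclideanSpace.single (⟨0, hd⟩ : Fin d) ((3:ℝ) * 2^n / 2) with hc
    have hcnorm : ‖c‖ = 3 * 2^n / 2 := by
      rw [hc, EuclideanSpace.norm_single, Real.norm_eq_abs, abs_of_pos (by positivity)]
    have hsub : Metric.ball c r ×ˢ Metric.closedBall (0 : EuclideanSpace ℝ (Fin d)) r' ⊆ A n := by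
      rintro z ⟨hz1, hz2⟩
      rw [Metric.mem_ball] at hz1
      have habs : |‖z.1‖ - ‖c‖| ≤ dist z.1 c := abs_norm_sub_norm_le _ _
      have h1 : ‖z.1‖ - ‖c‖ ≤ dist z.1 c := (abs_le.1 habs).2
      have h2 : -(dist z.1 c) ≤ ‖z.1‖ - ‖c‖ := (abs_le.1 habs).1
      refine ⟨⟨?_, ?_⟩, hz2⟩
      · rw [Metric.mem_ball, dist_zero_right]
        have : (2:ℝ)^(n+1) = 2 * 2^n := by rw [pow_succ]; ring
        rw [this]
        have := hz1
        nlinarith [hcnorm]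
      · rw [Metric.mem_ball, dist_zero_right]
        push_neg
        nlinarith [hcnorm]
    have hrr : r * r' = 1/8 := by
      rw [hr0, hr'0]
      have : (2:ℝ)^(n+2) = 2^n * 4 := by rw [pow_succ, pow_succ]; ring
      rw [this]
      field_simp
      ring
    calc c0 = (ENNReal.ofReal (r^dd) * κ) * (ENNReal.ofReal (r'^dd) * κ) := by
          rw [hc0]
          rw [← hrr, mul_pow, ENNReal.ofReal_mul (by positivity)]
          ring
      _ = volume (Metric.ball c r ×ˢ Metric.closedBall (0 : EuclideanSpace ℝ (Fin d)) r') := by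
          rw [MeasureTheory.Measure.volume_eq_prod, Measure.prod_prod,
            Measure.addHaar_ball volume c hr.le,
            Measure.addHaar_closedBall volume (0 : EuclideanSpace ℝ (Fin d)) hr'.le]
      _ ≤ volume (A n) := measure_mono hsub
  have hc0ne : c0 ≠ 0 := by
    refine mul_ne_zero (mul_ne_zero ?_ hκpos.ne') hκpos.ne'
    exact (ENNReal.ofReal_pos.2 (by positivity)).ne'
  have htop : volume (⋃ n, A n) = ⊤ := by
    rw [measure_iUnion hdisj hAmeas]
    refine top_le_iff.1 ?_
    calc (⊤:ℝ≥0∞) = ∑' _ : ℕ, c0 := (ENNReal.tsum_const_eq_top_of_ne_zero hc0ne).symm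
      _ ≤ ∑' n, volume (A n) := ENNReal.tsum_le_tsum hlow
  have hStop : volume S = ⊤ :=
    top_le_iff.1 (htop ▸ measure_mono (Set.iUnion_subset hAS))
  exact hcheb.ne hStop
end

section
/- For d = 1, the function Θ_σ(ζ₁,ζ₂) = -2Ci(4π|ζ₁ζ₂|) does not belong to L^p(ℝ²) for any 1 ≤ p ≤ ∞. -/
open Real MeasureTheory Complex Filter Topology intervalIntegral
open scoped ENNReal

lemma aux_not_summable (ε : ℝ) (hε : 0 < ε) :
    ¬ Summable (fun n : ℕ => ε / (2 * ((n : ℝ) + 1))) := by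
  intro h
  have h2 : Summable (fun n : ℕ => 1 / ((n : ℝ) + 1)) := by
    have := h.mul_left (2 / ε)
    convert this using 2 with n
    · rfl
    field_simp [hε.ne']
  have h3 : Summable (fun n : ℕ => 1 / ((n + 1 : ℕ) : ℝ)) := by
    simpa using h2
  exact Real.not_summable_one_div_natCast ((summable_nat_add_iff 1).1 h3)

lemma aux_measure (ε : ℝ) (hε : 0 < ε) :
    volume {ζ : ℝ × ℝ | 0 < |ζ.1 * ζ.2| ∧ |ζ.1 * ζ.2| < ε} = ⊤ := by
  set B : ℕ → Set (ℝ × ℝ) := fun n =>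
    Set.Ioo (n : ℝ) (n + 1) ×ˢ Set.Ioo (ε / (2 * (n + 1))) (ε / (n + 1)) with hB
  have hpos : ∀ n : ℕ, (0 : ℝ) < (n : ℝ) + 1 := fun n => by positivity
  have hsub : (⋃ n, B n) ⊆ {ζ : ℝ × ℝ | 0 < |ζ.1 * ζ.2| ∧ |ζ.1 * ζ.2| < ε} := by
    rintro ⟨a, b⟩ hab
    simp only [Set.mem_iUnion, hB, Set.mem_prod, Set.mem_Ioo] at hab
    obtain ⟨n, ⟨ha1, ha2⟩, hb1, hb2⟩ := hab
    have hn := hpos n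
    have ha0 : 0 < a := lt_of_le_of_lt (Nat.cast_nonneg n) ha1
    have hb0 : 0 < b := lt_trans (by positivity) hb1
    have habs : |a * b| = a * b := abs_of_pos (mul_pos ha0 hb0)
    constructor
    · simpa [habs] using mul_pos ha0 hb0
    · rw [habs]
      calc a * b < (n + 1) * (ε / (n + 1)) := by
            apply mul_lt_mul'' ha2 hb2 ha0.le hb0.le
        _ = ε := by field_simp
  have hdisj : Pairwise (Function.onFun Disjoint B) := by
    intro m n hmn
    apply Set.disjoint_left.2
    rintro ⟨a, b⟩ hm hn
    simp only [hB, Set.mem_prod, Set.mem_Ioo] at hm hn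
    rcases lt_or_gt_of_ne hmn with h | h
    · have : (m : ℝ) + 1 ≤ n := by exact_mod_cast Nat.succ_le_of_lt h
      linarith [hm.1.2, hn.1.1]
    · have : (n : ℝ) + 1 ≤ m := by exact_mod_cast Nat.succ_le_of_lt h
      linarith [hn.1.2, hm.1.1]
  have hmeas : ∀ n, MeasurableSet (B n) := fun n =>
    measurableSet_Ioo.prod measurableSet_Ioo
  have hvol : ∀ n : ℕ, volume (B n) = ENNReal.ofReal (ε / (2 * ((n : ℝ) + 1))) := by
    intro n
    have hn := hpos n
    rw [hB]
    simp only [MeasureTheory.Measure.volume_eq_prod, MeasureTheory.Measure.prod_prod,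
      Real.volume_Ioo]
    rw [show (n : ℝ) + 1 - n = 1 by ring, ENNReal.ofReal_one, one_mul]
    congr 1
    field_simp
    ring
  have hU : volume (⋃ n, B n) = ⊤ := by
    rw [measure_iUnion hdisj hmeas]
    simp_rw [hvol]
    by_contra h
    apply aux_not_summable ε hε
    have : ∀ n : ℕ, ENNReal.ofReal (ε / (2 * ((n : ℝ) + 1)))
        = ((ε / (2 * ((n : ℝ) + 1))).toNNReal : ℝ≥0∞) := fun n => rfl
    simp_rw [this] at h
    have hs := ENNReal.tsum_coe_ne_top_iff_summable.1 h
    have := NNReal.summable_coe.2 hs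
    convert this using 2 with n
    rw [Real.coe_toNNReal]
    positivity
  exact top_unique (hU ▸ measure_mono hsub)

lemma aux_intable {a b : ℝ} (ha : 0 < a) (hb : 0 < b) :
    IntervalIntegrable (fun s : ℝ => Real.cos s / s) volume a b := by
  apply ContinuousOn.intervalIntegrable
  apply Real.continuous_cos.continuousOn.div continuousOn_id
  intro x hx
  have h1 : a ⊓ b ≤ x := hx.1
  exact ne_of_gt (lt_of_lt_of_le (lt_min ha hb) h1)

lemma aux_ci_bound (Ci : ℝ → ℝ)
    (hCi : ∀ t : ℝ, 0 < t →
      Tendsto (fun R => ∫ s in t..R, Real.cos s / s) atTop (𝓝 (-Ci t)))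
    {t : ℝ} (ht : 0 < t) (ht1 : t ≤ 1) :
    Ci t ≤ Ci 1 + Real.cos 1 * Real.log t := by
  have heq : -Ci t = (∫ s in t..1, Real.cos s / s) + -Ci 1 := by
    have h1 : Tendsto (fun R => (∫ s in t..1, Real.cos s / s) + ∫ s in (1:ℝ)..R, Real.cos s / s)
        atTop (𝓝 ((∫ s in t..1, Real.cos s / s) + -Ci 1)) :=
      tendsto_const_nhds.add (hCi 1 one_pos)
    have h2 : ∀ᶠ R in atTop, (∫ s in t..1, Real.cos s / s) + (∫ s in (1:ℝ)..R, Real.cos s / s)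
        = ∫ s in t..R, Real.cos s / s := by
      filter_upwards [eventually_gt_atTop (0:ℝ)] with R hR
      exact integral_add_adjacent_intervals (aux_intable ht one_pos) (aux_intable one_pos hR)
    have h3 : Tendsto (fun R => ∫ s in t..R, Real.cos s / s) atTop
        (𝓝 ((∫ s in t..1, Real.cos s / s) + -Ci 1)) := Tendsto.congr' h2 h1
    exact tendsto_nhds_unique (hCi t ht) h3
  have hmono : (∫ s in t..1, Real.cos 1 / s) ≤ ∫ s in t..1, Real.cos s / s := by
    apply integral_mono_on ht1 _ (aux_intable ht one_pos)
    · intro x hx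
      have hx0 : 0 < x := lt_of_lt_of_le ht hx.1
      gcongr
      exact Real.cos_le_cos_of_nonneg_of_le_pi hx0.le (by linarith [Real.pi_gt_three]) hx.2
    · apply ContinuousOn.intervalIntegrable
      apply continuousOn_const.div continuousOn_id
      intro x hx
      rw [Set.uIcc_of_le ht1] at hx
      exact ne_of_gt (lt_of_lt_of_le ht hx.1)
  have hlog : (∫ s in t..1, Real.cos 1 / s) = -(Real.cos 1 * Real.log t) := by
    have : (∫ s in t..1, Real.cos 1 / s) = Real.cos 1 * ∫ s in t..1, 1 / s := by
      rw [← intervalIntegral.integral_const_mul]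
      congr 1; ext s; ring
    rw [this, integral_one_div]
    · rw [Real.log_div one_ne_zero (ne_of_gt ht), Real.log_one]; ring
    · rw [Set.uIcc_of_le ht1]
      intro h
      exact absurd h.1 (not_le.2 ht)
  nlinarith [hmono, hlog, heq]

/-- For `d = 1`, the function `Θ_σ(ζ₁,ζ₂) = -2 Ci (4π|ζ₁ζ₂|)` does not belong
to `L^p(ℝ²)` for any `1 ≤ p ≤ ∞`. Here `Ci` is the cosine integral
`Ci t = -∫_t^∞ cos s / s ds` (an improper integral, encoded as a limit). -/
theorem stmt_13 (Ci : ℝ → ℝ)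
    (hCi : ∀ t : ℝ, 0 < t →
      Tendsto (fun R => ∫ s in t..R, Real.cos s / s) atTop (𝓝 (-Ci t)))
    (p : ℝ≥0∞) (hp : 1 ≤ p) :
    ¬ MemLp (fun ζ : ℝ × ℝ => -2 * Ci (4 * π * |ζ.1 * ζ.2|)) p (volume) := by
  intro hf
  set f : ℝ × ℝ → ℝ := fun ζ => -2 * Ci (4 * π * |ζ.1 * ζ.2|) with hfdef
  have hsmall : ∀ M : ℝ, ∃ ε : ℝ, 0 < ε ∧ ∀ x : ℝ, 0 < x → x < ε → Ci x < -M := by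
    intro M
    refine ⟨min 1 (Real.exp ((-M - Ci 1) / Real.cos 1)), lt_min one_pos (Real.exp_pos _), ?_⟩
    intro x hx hxε
    have hx1 : x ≤ 1 := le_of_lt (lt_of_lt_of_le hxε (min_le_left _ _))
    have hb := aux_ci_bound Ci hCi hx hx1
    have hc1 : 0 < Real.cos 1 := Real.cos_one_pos
    have hlog : Real.log x < (-M - Ci 1) / Real.cos 1 := by
      calc Real.log x < Real.log (Real.exp ((-M - Ci 1) / Real.cos 1)) :=
            Real.log_lt_log hx (lt_of_lt_of_le hxε (min_le_right _ _))
        _ = _ := Real.log_exp _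
    have h4 : Real.log x * Real.cos 1 < -M - Ci 1 := (lt_div_iff₀ hc1).1 hlog
    nlinarith
  have hA : ∀ M : ℝ, 0 ≤ M → ∃ A : Set (ℝ × ℝ), volume A = ⊤ ∧ ∀ ζ ∈ A, M ≤ ‖f ζ‖ := by
    intro M hM
    obtain ⟨ε, hε, hCismall⟩ := hsmall M
    have h4π : (0:ℝ) < 4 * π := by positivity
    refine ⟨{ζ : ℝ × ℝ | 0 < |ζ.1 * ζ.2| ∧ |ζ.1 * ζ.2| < ε / (4 * π)},
      aux_measure _ (by positivity), ?_⟩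
    rintro ζ ⟨h1, h2⟩
    have hx0 : 0 < 4 * π * |ζ.1 * ζ.2| := mul_pos h4π h1
    have hxε : 4 * π * |ζ.1 * ζ.2| < ε := by
      have := (lt_div_iff₀ h4π).1 h2
      linarith [this, mul_comm (|ζ.1 * ζ.2|) (4 * π)]
    have hci := hCismall _ hx0 hxε
    rw [hfdef]
    simp only [Real.norm_eq_abs]
    have habs : |(-2 : ℝ) * Ci (4 * π * |ζ.1 * ζ.2|)| = 2 * |Ci (4 * π * |ζ.1 * ζ.2|)| := by
      rw [abs_mul]; norm_num
    rw [habs]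
    have hle := neg_le_abs (Ci (4 * π * |ζ.1 * ζ.2|))
    linarith
  by_cases hptop : p = ∞
  · rw [hptop] at hf
    have hb : eLpNormEssSup f volume < ⊤ := by
      have := hf.2
      rwa [eLpNorm_exponent_top] at this
    set C := (eLpNormEssSup f volume).toReal with hC
    obtain ⟨A, hAvol, hAbound⟩ := hA (C + 1) (by positivity)
    have hae : ∀ᵐ ζ ∂(volume : Measure (ℝ × ℝ)),
        (‖f ζ‖₊ : ℝ≥0∞) ≤ eLpNormEssSup f volume :=
      enorm_ae_le_eLpNormEssSup f volume
    have hnull : volume {ζ : ℝ × ℝ | ¬ ((‖f ζ‖₊ : ℝ≥0∞) ≤ eLpNormEssSup f volume)} = 0 :=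
      ae_iff.1 hae
    have hsub : A ⊆ {ζ : ℝ × ℝ | ¬ ((‖f ζ‖₊ : ℝ≥0∞) ≤ eLpNormEssSup f volume)} := by
      intro ζ hζ
      simp only [Set.mem_setOf_eq, not_le]
      calc eLpNormEssSup f volume < ENNReal.ofReal (C + 1) := by
            rw [ENNReal.lt_ofReal_iff_toReal_lt hb.ne]; linarith
        _ ≤ (‖f ζ‖₊ : ℝ≥0∞) := by
            rw [← enorm_eq_nnnorm, ← ofReal_norm_eq_enorm]
            exact ENNReal.ofReal_le_ofReal (hAbound ζ hζ)
    have h0 := measure_mono_null hsub hnull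
    rw [hAvol] at h0
    exact ENNReal.top_ne_zero h0
  · have hp0 : p ≠ 0 := fun h => by simp [h] at hp
    obtain ⟨A, hAvol, hAbound⟩ := hA 1 one_pos.le
    have hcheb : volume {ζ : ℝ × ℝ | (1 : ℝ≥0∞) ≤ ‖f ζ‖₊} < ∞ :=
      hf.meas_ge_lt_top' hp0 hptop one_ne_zero
    have hsub : A ⊆ {ζ : ℝ × ℝ | (1 : ℝ≥0∞) ≤ ‖f ζ‖₊} := by
      intro ζ hζ
      simp only [Set.mem_setOf_eq]
      rw [← enorm_eq_nnnorm, ← ofReal_norm_eq_enorm, ← ENNReal.ofReal_one]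
      exact ENNReal.ofReal_le_ofReal (hAbound ζ hζ)
    have : (⊤ : ℝ≥0∞) < ⊤ := by
      calc (⊤ : ℝ≥0∞) = volume A := hAvol.symm
        _ ≤ volume {ζ : ℝ × ℝ | (1 : ℝ≥0∞) ≤ ‖f ζ‖₊} := measure_mono hsub
        _ < ⊤ := hcheb
    exact lt_irrefl _ this
end

section
/- Let g(x,ω) = e^{-π|x|²}e^{-π|ω|²} be the Gaussian window on ℝ^{2d}, and let Θ(z₁,z₂) = sinc(z₁·z₂). Then the short-time Fourier transform V_gΘ satisfies, for all z = (z₁,z₂) and ζ = (ζ₁,ζ₂) in ℝ^{2d}: ∫_{ℝ^{2d}} |V_gΘ(z,ζ)| dζ ≤ C for a constant C independent of z; i.e., Θ ∈ W(ℱL¹, L^∞)(ℝ^{2d}). -/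
open Real MeasureTheory Complex
open scoped RealInnerProductSpace

noncomputable section AuxStmt15

namespace Stmt15

/-- per-coordinate chirp-Gaussian integrand -/
def h1d (t a b α β : ℝ) (u v : ℝ) : ℂ :=
  Complex.exp (2*π*Complex.I*((u*v)*t) - π*(u-a)^2 - π*(v-b)^2 - 2*π*Complex.I*(u*α+v*β))

/-- its double integral, in closed form -/
def Kc (t a b α β : ℝ) : ℂ :=
  (Real.sqrt (1+t^2) : ℂ)⁻¹ *
    Complex.exp (((-π*(a^2+β^2) + π*((a+t*β)^2 - (t*b-α)^2)/(1+t^2) : ℝ) : ℂ)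
      + ((-2*π*b*β + 2*π*(a+t*β)*(t*b-α)/(1+t^2) : ℝ) : ℂ) * Complex.I)

lemma int_v (t a b α β : ℝ) (u : ℝ) :
    ∫ v : ℝ, h1d t a b α β u v
      = Complex.exp (((-(π*(1+t^2)) : ℝ) : ℂ)*u^2
          + ((2*π*(a + t*β) : ℝ) + (2*π*(t*b - α) : ℝ)*Complex.I)*u
          + ((-(π*(a^2+β^2)) : ℝ) + ((-(2*π*b*β)) : ℝ)*Complex.I)) := by
  have h1 : (fun v : ℝ => h1d t a b α β u v)
      = fun v : ℝ => Complex.exp ((-π : ℂ)*v^2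
          + (((2*π*b : ℝ) : ℂ) + ((2*π*(t*u - β) : ℝ) : ℂ)*Complex.I)*v
          + (((-π*(u-a)^2 - π*b^2 : ℝ) : ℂ) + ((-(2*π*α*u) : ℝ) : ℂ)*Complex.I)) := by
    funext v
    unfold h1d
    congr 1
    push_cast
    ring
  rw [h1, integral_cexp_quadratic (by simpa using pi_pos : (-π : ℂ).re < 0)]
  rw [neg_neg, div_self (by exact_mod_cast pi_ne_zero), one_cpow, one_mul]
  congr 1
  have h4 : ((4 : ℂ) * (-π)) = ((-(4*π) : ℝ) : ℂ) := by push_cast; ring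
  rw [h4]
  simp only [Complex.ext_iff, Complex.add_re, Complex.sub_re, Complex.mul_re, Complex.add_im,
    Complex.sub_im, Complex.mul_im, Complex.div_ofReal_re, Complex.div_ofReal_im,
    Complex.ofReal_re, Complex.ofReal_im, Complex.I_re, Complex.I_im, Complex.neg_re,
    Complex.neg_im, Complex.ofReal_pow, Complex.one_re, Complex.one_im, pow_two]
  constructor
  · field_simp
    ring
  · field_simp
    ring

lemma sqrt_one_add_sq_pos (t : ℝ) : 0 < Real.sqrt (1+t^2) :=
  Real.sqrt_pos.mpr (by positivity)

lemma oneDim (t a b α β : ℝ) :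
    (∫ u : ℝ, ∫ v : ℝ, h1d t a b α β u v) = Kc t a b α β := by
  simp_rw [int_v]
  rw [integral_cexp_quadratic (b := ((-(π*(1+t^2)) : ℝ) : ℂ))
    (by rw [Complex.ofReal_re]; nlinarith [Real.pi_pos, sq_nonneg t])]
  unfold Kc
  congr 1
  · have h1 : ((π : ℂ) / -((-(π*(1+t^2)) : ℝ) : ℂ)) = (((1+t^2)⁻¹ : ℝ) : ℂ) := by
      push_cast
      rw [neg_neg, div_mul_eq_div_div, div_self (by exact_mod_cast Real.pi_ne_zero), one_div]
    rw [h1]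
    have h2 : ((1/2 : ℂ)) = (((1:ℝ)/2 : ℝ) : ℂ) := by norm_num
    rw [h2, ← Complex.ofReal_cpow (by positivity)]
    rw [show ((1+t^2)⁻¹ : ℝ) ^ ((1:ℝ)/2) = (Real.sqrt (1+t^2))⁻¹ by
      rw [Real.inv_rpow (by positivity), ← Real.sqrt_eq_rpow]]
    rw [Complex.ofReal_inv]
  · congr 1
    rw [show (4 : ℂ) * ((-(π*(1+t^2)) : ℝ) : ℂ) = ((-(4*π*(1+t^2)) : ℝ) : ℂ) by push_cast; ring]
    simp only [Complex.ext_iff, Complex.add_re, Complex.sub_re, Complex.mul_re, Complex.add_im,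
      Complex.sub_im, Complex.mul_im, Complex.div_ofReal_re, Complex.div_ofReal_im,
      Complex.ofReal_re, Complex.ofReal_im, Complex.I_re, Complex.I_im, Complex.neg_re,
      Complex.neg_im, Complex.ofReal_pow, Complex.one_re, Complex.one_im, pow_two]
    have hne3 : (1:ℝ) + t*t ≠ 0 := by nlinarith [sq_nonneg t]
    constructor
    · field_simp
      ring
    · field_simp
      ring

/-- the modulus of `Kc` -/
def nK (t a b α β : ℝ) : ℝ :=
  (Real.sqrt (1+t^2))⁻¹ *
    (Real.exp (-(π/(1+t^2)) * (t*b-α)^2) * Real.exp (-(π/(1+t^2)) * (t*a-β)^2))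

lemma norm_Kc (t a b α β : ℝ) : ‖Kc t a b α β‖ = nK t a b α β := by
  unfold Kc nK
  rw [norm_mul, Complex.norm_exp]
  have h1 : ‖((Real.sqrt (1+t^2) : ℝ) : ℂ)⁻¹‖ = (Real.sqrt (1+t^2))⁻¹ := by
    rw [norm_inv, Complex.norm_real, Real.norm_eq_abs,
      abs_of_pos (sqrt_one_add_sq_pos t)]
  rw [h1, ← Real.exp_add]
  congr 1
  have h2 : (((-π*(a^2+β^2) + π*((a+t*β)^2 - (t*b-α)^2)/(1+t^2) : ℝ) : ℂ)
      + ((-2*π*b*β + 2*π*(a+t*β)*(t*b-α)/(1+t^2) : ℝ) : ℂ) * Complex.I).re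
      = -π*(a^2+β^2) + π*((a+t*β)^2 - (t*b-α)^2)/(1+t^2) := by
    simp only [Complex.add_re, Complex.mul_re, Complex.I_re, Complex.I_im, Complex.ofReal_re,
      Complex.ofReal_im, mul_zero, zero_mul, mul_one, sub_zero, zero_sub, add_zero, neg_zero]
  rw [h2]
  have hne : (1:ℝ) + t^2 ≠ 0 := by positivity
  field_simp
  ring

lemma nK_nonneg (t a b α β : ℝ) : 0 ≤ nK t a b α β := by
  unfold nK
  positivity

/-- transport of the Fubini product formula to `EuclideanSpace` -/
lemma integral_eucl_prod {𝕜 : Type*} [RCLike 𝕜] {d : ℕ} (f : Fin d → ℝ → 𝕜) :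
    ∫ x : EuclideanSpace ℝ (Fin d), ∏ j, f j (x j) = ∏ j, ∫ u : ℝ, f j u := by
  have h1 := MeasurePreserving.integral_comp (EuclideanSpace.volume_preserving_symm_measurableEquiv_toLp (Fin d))
    (MeasurableEquiv.measurableEmbedding _) (fun y : Fin d → ℝ => ∏ j, f j (y j))
  have h2 := MeasureTheory.integral_fintype_prod_eq_prod (μ := fun _ => volume) f
  exact h1.trans h2

lemma integrable_eucl_prod {𝕜 : Type*} [RCLike 𝕜] {d : ℕ} (f : Fin d → ℝ → 𝕜)
    (hf : ∀ j, Integrable (f j)) :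
    Integrable (fun x : EuclideanSpace ℝ (Fin d) => ∏ j, f j (x j)) :=
  ((EuclideanSpace.volume_preserving_symm_measurableEquiv_toLp (Fin d)).integrable_comp_emb
      (MeasurableEquiv.measurableEmbedding _)).mpr (MeasureTheory.Integrable.fintype_prod hf)

lemma integrable_gauss_shift {c : ℝ} (hc : 0 < c) (m : ℝ) :
    Integrable (fun u : ℝ => Real.exp (-c * (m - u)^2)) := by
  have h : (fun u : ℝ => Real.exp (-c * (m - u)^2))
      = fun u : ℝ => Real.exp (-c * (u - m)^2) := by
    funext u; ring_nf
  rw [h]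
  exact (integrable_exp_neg_mul_sq hc).comp_sub_right m

lemma integral_gauss_shift {c : ℝ} (hc : 0 < c) (m : ℝ) :
    ∫ u : ℝ, Real.exp (-c * (m - u)^2) = Real.sqrt (π / c) := by
  have h : (fun u : ℝ => Real.exp (-c * (m - u)^2))
      = fun u : ℝ => Real.exp (-c * (u - m)^2) := by
    funext u; ring_nf
  rw [h]
  rw [show (fun u : ℝ => Real.exp (-c * (u - m)^2))
      = (fun u : ℝ => Real.exp (-c * u^2)) ∘ (fun u => u - m) from rfl]
  rw [show (∫ u : ℝ, ((fun u : ℝ => Real.exp (-c * u^2)) ∘ (fun u => u - m)) u)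
      = ∫ u : ℝ, Real.exp (-c * (u - m)^2) from rfl]
  rw [MeasureTheory.integral_sub_right_eq_self (fun u : ℝ => Real.exp (-c * u^2)) m]
  exact integral_gaussian c

lemma sinc_eq (s : ℝ) :
    (_root_.sinc s : ℂ) = ∫ t in Set.Ioc (-(1/2) : ℝ) (1/2), Complex.exp (2*π*Complex.I*(s*t)) := by
  rw [← intervalIntegral.integral_of_le (by norm_num : (-(1/2) : ℝ) ≤ 1/2)]
  have hform : ∀ t : ℝ, (2*π*Complex.I*(s*t) : ℂ) = (2*π*Complex.I*s) * (t : ℂ) := by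
    intro t; push_cast; ring
  simp_rw [hform]
  by_cases hs : s = 0
  · subst hs
    simp [_root_.sinc]
    norm_num
  · have hden : 2*(π:ℂ)*Complex.I*s ≠ 0 := by
      simp only [ne_eq, mul_eq_zero, Complex.I_ne_zero, or_false, not_or]
      refine ⟨⟨by norm_num, by exact_mod_cast Real.pi_ne_zero⟩, by exact_mod_cast hs⟩
    rw [integral_exp_mul_complex hden]
    push_cast
    rw [show 2*(π:ℂ)*Complex.I*(s:ℂ) * ((1/2) : ℂ) = ((π*s : ℝ) : ℂ) * Complex.I by push_cast; ring,
      show 2*(π:ℂ)*Complex.I*(s:ℂ) * (-(1/2) : ℂ) = ((-(π*s) : ℝ) : ℂ) * Complex.I by push_cast; ring]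
    rw [Complex.exp_mul_I, Complex.exp_mul_I]
    rw [_root_.sinc, if_neg hs]
    push_cast
    simp only [Complex.sin_neg, Complex.cos_neg, Complex.ofReal_neg]
    have hpis : ((π : ℂ)*(s:ℂ)) ≠ 0 :=
      mul_ne_zero (by exact_mod_cast Real.pi_ne_zero) (by exact_mod_cast hs)
    rw [div_eq_div_iff hpis hden]
    ring

variable {d : ℕ}

lemma norm_h1d (t a b α β u v : ℝ) :
    ‖h1d t a b α β u v‖ = Real.exp (-π*(u-a)^2) * Real.exp (-π*(v-b)^2) := by
  unfold h1d
  have h : (2*π*Complex.I*((u*v)*t) - π*(u-a)^2 - π*(v-b)^2 - 2*π*Complex.I*((u:ℂ)*α+(v:ℂ)*β) : ℂ)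
      = ((-π*(u-a)^2 - π*(v-b)^2 : ℝ) : ℂ)
        + ((2*π*(u*v*t) - 2*π*(u*α+v*β) : ℝ) : ℂ) * Complex.I := by
    push_cast; ring
  rw [h, Complex.norm_exp, ← Real.exp_add]
  congr 1
  simp only [Complex.add_re, Complex.mul_re, Complex.I_re, Complex.I_im, Complex.ofReal_re,
    Complex.ofReal_im, mul_zero, zero_mul, mul_one, sub_zero, zero_sub, add_zero, neg_zero]
  ring

lemma inner_eucl (aa bb : EuclideanSpace ℝ (Fin d)) : ⟪aa, bb⟫ = ∑ j, aa j * bb j := by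
  simp [PiLp.inner_apply, RCLike.inner_apply, starRingEnd_apply]
  exact Finset.sum_congr rfl fun _ _ => mul_comm _ _

lemma norm_sq_eucl (w : EuclideanSpace ℝ (Fin d)) : ‖w‖^2 = ∑ j, (w j)^2 := by
  rw [EuclideanSpace.norm_eq, Real.sq_sqrt (by positivity)]
  simp [sq_abs]

lemma gauss_shift_integrable' (m : ℝ) :
    Integrable (fun u : ℝ => Real.exp (-π * (u - m)^2)) :=
  (integrable_exp_neg_mul_sq Real.pi_pos).comp_sub_right m

lemma hpt_eq (t : ℝ) (z ζ : EuclideanSpace ℝ (Fin d) × EuclideanSpace ℝ (Fin d))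
    (y : EuclideanSpace ℝ (Fin d) × EuclideanSpace ℝ (Fin d)) :
    Complex.exp (2*π*Complex.I*(((⟪y.1,y.2⟫ : ℝ) : ℂ)*(t:ℂ))) *
        ((Real.exp (-π * ‖y.1 - z.1‖ ^ 2) * Real.exp (-π * ‖y.2 - z.2‖ ^ 2) : ℝ) : ℂ) *
        Complex.exp (-2 * π * Complex.I * ((⟪y.1, ζ.1⟫ + ⟪y.2, ζ.2⟫ : ℝ) : ℂ))
      = ∏ j, h1d t (z.1 j) (z.2 j) (ζ.1 j) (ζ.2 j) (y.1 j) (y.2 j) := by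
  unfold h1d
  rw [← Complex.exp_sum]
  rw [Complex.ofReal_mul, Complex.ofReal_exp, Complex.ofReal_exp,
    ← Complex.exp_add, ← Complex.exp_add, ← Complex.exp_add]
  congr 1
  rw [inner_eucl y.1 y.2, inner_eucl y.1 ζ.1, inner_eucl y.2 ζ.2,
    norm_sq_eucl (y.1 - z.1), norm_sq_eucl (y.2 - z.2)]
  have hsub1 : ∀ j, (y.1 - z.1) j = y.1 j - z.1 j := fun j => rfl
  have hsub2 : ∀ j, (y.2 - z.2) j = y.2 j - z.2 j := fun j => rfl
  simp_rw [hsub1, hsub2]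
  push_cast
  rw [Finset.sum_mul (f := fun j => (y.1 j : ℂ) * (y.2 j : ℂ))]
  simp only [Finset.mul_sum, mul_add, neg_mul, ← Finset.sum_neg_distrib,
    ← Finset.sum_add_distrib, ← Finset.sum_sub_distrib]
  refine Finset.sum_congr rfl fun j _ => by push_cast; ring

lemma chirp_integrand_integrable (t : ℝ)
    (z ζ : EuclideanSpace ℝ (Fin d) × EuclideanSpace ℝ (Fin d)) :
    Integrable (fun y : EuclideanSpace ℝ (Fin d) × EuclideanSpace ℝ (Fin d) =>
        ∏ j, h1d t (z.1 j) (z.2 j) (ζ.1 j) (ζ.2 j) (y.1 j) (y.2 j))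
      ((volume : Measure (EuclideanSpace ℝ (Fin d))).prod volume) := by
  have hg1 : Integrable (fun x : EuclideanSpace ℝ (Fin d) =>
      ∏ j, Real.exp (-π * (x j - z.1 j)^2)) volume :=
    integrable_eucl_prod _ (fun j => gauss_shift_integrable' (z.1 j))
  have hg2 : Integrable (fun x : EuclideanSpace ℝ (Fin d) =>
      ∏ j, Real.exp (-π * (x j - z.2 j)^2)) volume :=
    integrable_eucl_prod _ (fun j => gauss_shift_integrable' (z.2 j))
  have hmaj := hg1.mul_prod hg2
  refine hmaj.mono' ?_ ?_
  · apply Continuous.aestronglyMeasurable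
    apply continuous_finset_prod
    intro j _
    unfold h1d
    apply Complex.continuous_exp.comp
    have h1 : Continuous fun y : EuclideanSpace ℝ (Fin d) × EuclideanSpace ℝ (Fin d) => y.1 j :=
      (PiLp.continuous_apply 2 _ j).comp continuous_fst
    have h2 : Continuous fun y : EuclideanSpace ℝ (Fin d) × EuclideanSpace ℝ (Fin d) => y.2 j :=
      (PiLp.continuous_apply 2 _ j).comp continuous_snd
    fun_prop
  · refine Filter.Eventually.of_forall fun y => ?_
    rw [norm_prod]
    simp_rw [norm_h1d]
    rw [Finset.prod_mul_distrib]

lemma chirp_eq (t : ℝ) (z ζ : EuclideanSpace ℝ (Fin d) × EuclideanSpace ℝ (Fin d)) :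
    (∫ y : EuclideanSpace ℝ (Fin d) × EuclideanSpace ℝ (Fin d),
      Complex.exp (2*π*Complex.I*(((⟪y.1,y.2⟫ : ℝ) : ℂ)*(t:ℂ))) *
        ((Real.exp (-π * ‖y.1 - z.1‖ ^ 2) * Real.exp (-π * ‖y.2 - z.2‖ ^ 2) : ℝ) : ℂ) *
        Complex.exp (-2 * π * Complex.I * ((⟪y.1, ζ.1⟫ + ⟪y.2, ζ.2⟫ : ℝ) : ℂ)))
    = ∏ j, Kc t (z.1 j) (z.2 j) (ζ.1 j) (ζ.2 j) := by
  simp_rw [hpt_eq t z ζ]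
  rw [Measure.volume_eq_prod, MeasureTheory.integral_prod _ (chirp_integrand_integrable t z ζ)]
  have hinner : ∀ x : EuclideanSpace ℝ (Fin d),
      (∫ y : EuclideanSpace ℝ (Fin d),
        ∏ j, h1d t (z.1 j) (z.2 j) (ζ.1 j) (ζ.2 j) (x j) (y j))
      = ∏ j, ∫ v : ℝ, h1d t (z.1 j) (z.2 j) (ζ.1 j) (ζ.2 j) (x j) v := fun x =>
    integral_eucl_prod (fun j v => h1d t (z.1 j) (z.2 j) (ζ.1 j) (ζ.2 j) (x j) v)
  simp_rw [hinner]
  rw [integral_eucl_prod (fun j u => ∫ v : ℝ, h1d t (z.1 j) (z.2 j) (ζ.1 j) (ζ.2 j) u v)]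
  exact Finset.prod_congr rfl fun j _ => oneDim _ _ _ _ _

lemma one_add_sq_pos (t : ℝ) : 0 < 1 + t^2 := by positivity

lemma prod_nK_eq (t : ℝ) (z ζ : EuclideanSpace ℝ (Fin d) × EuclideanSpace ℝ (Fin d)) :
    ∏ j, nK t (z.1 j) (z.2 j) (ζ.1 j) (ζ.2 j)
      = (∏ j, Real.exp (-(π/(1+t^2)) * (t * z.2 j - ζ.1 j)^2)) *
        ∏ j, (Real.sqrt (1+t^2))⁻¹ * Real.exp (-(π/(1+t^2)) * (t * z.1 j - ζ.2 j)^2) := by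
  rw [← Finset.prod_mul_distrib]
  exact Finset.prod_congr rfl fun j _ => by unfold nK; ring

lemma int_nK (t : ℝ) (z : EuclideanSpace ℝ (Fin d) × EuclideanSpace ℝ (Fin d)) :
    ∫ ζ : EuclideanSpace ℝ (Fin d) × EuclideanSpace ℝ (Fin d),
      ∏ j, nK t (z.1 j) (z.2 j) (ζ.1 j) (ζ.2 j) = (Real.sqrt (1+t^2))^d := by
  have hc : 0 < π/(1+t^2) := by positivity
  have hval : π/(π/(1+t^2)) = 1+t^2 := by
    field_simp
  simp_rw [prod_nK_eq t z]
  rw [Measure.volume_eq_prod, MeasureTheory.integral_prod_mul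
    (f := fun x : EuclideanSpace ℝ (Fin d) => ∏ j, Real.exp (-(π/(1+t^2)) * (t * z.2 j - x j)^2))
    (g := fun x : EuclideanSpace ℝ (Fin d) => ∏ j, (Real.sqrt (1+t^2))⁻¹ *
      Real.exp (-(π/(1+t^2)) * (t * z.1 j - x j)^2)),
    integral_eucl_prod (f := fun j u => Real.exp (-(π/(1+t^2)) * (t * z.2 j - u)^2)),
    integral_eucl_prod (f := fun j u => (Real.sqrt (1+t^2))⁻¹ *
      Real.exp (-(π/(1+t^2)) * (t * z.1 j - u)^2))]
  have h1 : ∀ m : ℝ, ∫ u : ℝ, Real.exp (-(π/(1+t^2)) * (m - u)^2) = Real.sqrt (1+t^2) := by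
    intro m
    rw [integral_gauss_shift hc m, hval]
  have h2 : ∀ j : Fin d, ∫ u : ℝ, (Real.sqrt (1+t^2))⁻¹ *
      Real.exp (-(π/(1+t^2)) * (t * z.1 j - u)^2) = 1 := by
    intro j
    rw [integral_const_mul, h1 (t * z.1 j),
      inv_mul_cancel₀ (ne_of_gt (sqrt_one_add_sq_pos t))]
  simp_rw [h1, h2]
  simp

lemma int_nK_integrable (t : ℝ) (z : EuclideanSpace ℝ (Fin d) × EuclideanSpace ℝ (Fin d)) :
    Integrable (fun ζ : EuclideanSpace ℝ (Fin d) × EuclideanSpace ℝ (Fin d) =>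
      ∏ j, nK t (z.1 j) (z.2 j) (ζ.1 j) (ζ.2 j)) := by
  have hc : 0 < π/(1+t^2) := by positivity
  simp_rw [prod_nK_eq t z]
  rw [Measure.volume_eq_prod]
  exact (integrable_eucl_prod _ (fun j => integrable_gauss_shift hc (t * z.2 j))).mul_prod
    (integrable_eucl_prod _ (fun j => (integrable_gauss_shift hc (t * z.1 j)).const_mul _))

lemma gauss_prod_eucl (w m : EuclideanSpace ℝ (Fin d)) :
    Real.exp (-π * ‖w - m‖^2) = ∏ j, Real.exp (-π * (w j - m j)^2) := by
  rw [norm_sq_eucl (w - m), Finset.mul_sum, Real.exp_sum]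
  exact Finset.prod_congr rfl fun j _ => rfl

lemma norm_cexp_chirp (s t : ℝ) : ‖Complex.exp (2*π*Complex.I*((s:ℂ)*(t:ℂ)))‖ = 1 := by
  rw [Complex.norm_exp,
    show (2*π*Complex.I*((s:ℂ)*(t:ℂ))).re = 0 by
      simp only [Complex.mul_re, Complex.mul_im, Complex.I_re, Complex.I_im, Complex.ofReal_re,
        Complex.ofReal_im, Complex.re_ofNat, Complex.im_ofNat, mul_zero, zero_mul, mul_one,
        sub_zero, zero_sub, add_zero, zero_add, neg_zero]]
  exact Real.exp_zero

lemma norm_cexp_char (r : ℝ) : ‖Complex.exp (-2 * π * Complex.I * (r:ℂ))‖ = 1 := by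
  rw [Complex.norm_exp,
    show ((-2) * π * Complex.I * (r:ℂ)).re = 0 by
      simp only [Complex.mul_re, Complex.mul_im, Complex.I_re, Complex.I_im, Complex.ofReal_re,
        Complex.ofReal_im, mul_zero, zero_mul, mul_one, sub_zero, zero_sub, add_zero, zero_add,
        neg_zero, Complex.neg_re, Complex.neg_im, Complex.re_ofNat, Complex.im_ofNat]]
  exact Real.exp_zero

lemma inner_rep (z ζ : EuclideanSpace ℝ (Fin d) × EuclideanSpace ℝ (Fin d)) :
    (∫ y : EuclideanSpace ℝ (Fin d) × EuclideanSpace ℝ (Fin d),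
        (_root_.sinc ⟪y.1, y.2⟫ : ℂ) *
          ((Real.exp (-π * ‖y.1 - z.1‖ ^ 2) * Real.exp (-π * ‖y.2 - z.2‖ ^ 2) : ℝ) : ℂ) *
          Complex.exp (-2 * π * Complex.I * ((⟪y.1, ζ.1⟫ + ⟪y.2, ζ.2⟫ : ℝ) : ℂ)))
    = ∫ t in Set.Ioc (-(1/2) : ℝ) (1/2),
        ∫ y : EuclideanSpace ℝ (Fin d) × EuclideanSpace ℝ (Fin d),
          Complex.exp (2*π*Complex.I*(((⟪y.1,y.2⟫ : ℝ) : ℂ)*(t:ℂ))) *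
            ((Real.exp (-π * ‖y.1 - z.1‖ ^ 2) * Real.exp (-π * ‖y.2 - z.2‖ ^ 2) : ℝ) : ℂ) *
            Complex.exp (-2 * π * Complex.I * ((⟪y.1, ζ.1⟫ + ⟪y.2, ζ.2⟫ : ℝ) : ℂ)) := by
  simp_rw [sinc_eq]
  simp_rw [← MeasureTheory.integral_mul_const]
  rw [MeasureTheory.integral_integral_swap]
  have hG : Integrable (fun y : EuclideanSpace ℝ (Fin d) × EuclideanSpace ℝ (Fin d) =>
      Real.exp (-π * ‖y.1 - z.1‖ ^ 2) * Real.exp (-π * ‖y.2 - z.2‖ ^ 2)) volume := by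
    simp_rw [gauss_prod_eucl]
    rw [Measure.volume_eq_prod]
    exact (integrable_eucl_prod _ (fun j => gauss_shift_integrable' (z.1 j))).mul_prod
      (integrable_eucl_prod _ (fun j => gauss_shift_integrable' (z.2 j)))
  have hmaj := hG.mul_prod (integrable_const (1:ℝ)
    (μ := volume.restrict (Set.Ioc (-(1/2) : ℝ) (1/2))))
  refine hmaj.mono' ?_ ?_
  · apply Continuous.aestronglyMeasurable
    have hin : Continuous fun y : EuclideanSpace ℝ (Fin d) × EuclideanSpace ℝ (Fin d) =>
        (⟪y.1, y.2⟫ : ℝ) := continuous_fst.inner continuous_snd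
    have hin1 : Continuous fun y : EuclideanSpace ℝ (Fin d) × EuclideanSpace ℝ (Fin d) =>
        (⟪y.1, ζ.1⟫ : ℝ) := continuous_fst.inner continuous_const
    have hin2 : Continuous fun y : EuclideanSpace ℝ (Fin d) × EuclideanSpace ℝ (Fin d) =>
        (⟪y.2, ζ.2⟫ : ℝ) := continuous_snd.inner continuous_const
    fun_prop
  · refine Filter.Eventually.of_forall fun p => ?_
    rw [Function.uncurry_def]
    simp only [norm_mul, norm_cexp_chirp, norm_cexp_char, Complex.norm_real, Real.norm_eq_abs,
      one_mul, mul_one]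
    simp [Real.abs_exp]

lemma measurable_sinc : Measurable _root_.sinc := by
  unfold _root_.sinc
  refine Measurable.ite (measurableSet_eq) measurable_const ?_
  exact (Real.measurable_sin.comp (measurable_const.mul measurable_id)).div
    (measurable_const.mul measurable_id)

lemma ofReal_int_le {X : Type*} [MeasurableSpace X] (μ : Measure X) (g : X → ℝ)
    (hg : ∀ x, 0 ≤ g x) :
    ENNReal.ofReal (∫ x, g x ∂μ) ≤ ∫⁻ x, ENNReal.ofReal (g x) ∂μ := by
  by_cases hint : Integrable g μ
  · exact (ofReal_integral_eq_lintegral_ofReal hint (Filter.Eventually.of_forall hg)).le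
  · rw [MeasureTheory.integral_undef hint]
    simp

lemma cont_nK (z : EuclideanSpace ℝ (Fin d) × EuclideanSpace ℝ (Fin d)) :
    Continuous fun p : (EuclideanSpace ℝ (Fin d) × EuclideanSpace ℝ (Fin d)) × ℝ =>
      ∏ j, nK p.2 (z.1 j) (z.2 j) (p.1.1 j) (p.1.2 j) := by
  apply continuous_finset_prod
  intro j _
  unfold nK
  have ht : Continuous fun p : (EuclideanSpace ℝ (Fin d) × EuclideanSpace ℝ (Fin d)) × ℝ =>
    p.2 := continuous_snd
  have h1p : Continuous fun p : (EuclideanSpace ℝ (Fin d) × EuclideanSpace ℝ (Fin d)) × ℝ =>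
      1 + p.2^2 := by fun_prop
  have hdiv : Continuous fun p : (EuclideanSpace ℝ (Fin d) × EuclideanSpace ℝ (Fin d)) × ℝ =>
      π / (1 + p.2^2) :=
    continuous_const.div h1p fun p => ne_of_gt (one_add_sq_pos p.2)
  have hsq : Continuous fun p : (EuclideanSpace ℝ (Fin d) × EuclideanSpace ℝ (Fin d)) × ℝ =>
      (Real.sqrt (1 + p.2^2))⁻¹ :=
    (Real.continuous_sqrt.comp h1p).inv₀ fun p => ne_of_gt (sqrt_one_add_sq_pos p.2)
  have ha : Continuous fun p : (EuclideanSpace ℝ (Fin d) × EuclideanSpace ℝ (Fin d)) × ℝ =>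
      p.1.1 j := (PiLp.continuous_apply 2 _ j).comp (continuous_fst.fst)
  have hb : Continuous fun p : (EuclideanSpace ℝ (Fin d) × EuclideanSpace ℝ (Fin d)) × ℝ =>
      p.1.2 j := (PiLp.continuous_apply 2 _ j).comp (continuous_fst.snd)
  refine hsq.mul (Continuous.mul ?_ ?_)
  · exact Real.continuous_exp.comp ((hdiv.neg).mul
      (((ht.mul continuous_const).sub ha).pow 2))
  · exact Real.continuous_exp.comp ((hdiv.neg).mul
      (((ht.mul continuous_const).sub hb).pow 2))

lemma sqrt_le_two {t : ℝ} (ht : t ∈ Set.Ioc (-(1/2) : ℝ) (1/2)) : Real.sqrt (1 + t^2) ≤ 2 := by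
  have h4 : 1 + t^2 ≤ 4 := by nlinarith [ht.1.le, ht.2]
  calc Real.sqrt (1 + t^2) ≤ Real.sqrt 4 := Real.sqrt_le_sqrt h4
    _ = 2 := by
        rw [show (4:ℝ) = 2^2 by norm_num, Real.sqrt_sq (by norm_num : (0:ℝ) ≤ 2)]

end Stmt15

end AuxStmt15

/-- With the Gaussian window `g(x,ω) = e^{-π|x|²}e^{-π|ω|²}` on `ℝ^{2d}` and
`Θ(z₁,z₂) = sinc (z₁·z₂)`, the short-time Fourier transform
`V_gΘ(z,ζ) = ∫ Θ(y) conj(g(y-z)) e^{-2πi y·ζ} dy` satisfies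
`∫ |V_gΘ(z,ζ)| dζ ≤ C` with `C` independent of `z`; that is,
`Θ ∈ W(ℱL¹, L^∞)(ℝ^{2d})`. -/
theorem stmt_15 (d : ℕ) :
    ∃ C : ℝ, ∀ z : EuclideanSpace ℝ (Fin d) × EuclideanSpace ℝ (Fin d),
      (∫ ζ : EuclideanSpace ℝ (Fin d) × EuclideanSpace ℝ (Fin d),
        ‖∫ y : EuclideanSpace ℝ (Fin d) × EuclideanSpace ℝ (Fin d),
            (_root_.sinc ⟪y.1, y.2⟫ : ℂ) *
              (starRingEnd ℂ) ((Real.exp (-π * ‖y.1 - z.1‖ ^ 2) *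
                Real.exp (-π * ‖y.2 - z.2‖ ^ 2) : ℝ) : ℂ) *
              Complex.exp (-2 * π * Complex.I *
                ((⟪y.1, ζ.1⟫ + ⟪y.2, ζ.2⟫ : ℝ) : ℂ))‖) ≤ C := by
  classical
  refine ⟨2^d, fun z => ?_⟩
  simp_rw [Complex.conj_ofReal]
  have hsm : AEStronglyMeasurable
      (fun ζ : EuclideanSpace ℝ (Fin d) × EuclideanSpace ℝ (Fin d) =>
        ∫ y : EuclideanSpace ℝ (Fin d) × EuclideanSpace ℝ (Fin d),
          (_root_.sinc ⟪y.1, y.2⟫ : ℂ) *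
            ((Real.exp (-π * ‖y.1 - z.1‖ ^ 2) * Real.exp (-π * ‖y.2 - z.2‖ ^ 2) : ℝ) : ℂ) *
            Complex.exp (-2 * π * Complex.I * ((⟪y.1, ζ.1⟫ + ⟪y.2, ζ.2⟫ : ℝ) : ℂ))) volume := by
    have hF : AEStronglyMeasurable
        (fun p : (EuclideanSpace ℝ (Fin d) × EuclideanSpace ℝ (Fin d)) ×
            (EuclideanSpace ℝ (Fin d) × EuclideanSpace ℝ (Fin d)) =>
          (_root_.sinc ⟪p.2.1, p.2.2⟫ : ℂ) *
            ((Real.exp (-π * ‖p.2.1 - z.1‖ ^ 2) * Real.exp (-π * ‖p.2.2 - z.2‖ ^ 2) : ℝ) : ℂ) *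
            Complex.exp (-2 * π * Complex.I * ((⟪p.2.1, p.1.1⟫ + ⟪p.2.2, p.1.2⟫ : ℝ) : ℂ)))
        (volume.prod volume) := by
      haveI : BorelSpace ((EuclideanSpace ℝ (Fin d) × EuclideanSpace ℝ (Fin d)) ×
          (EuclideanSpace ℝ (Fin d) × EuclideanSpace ℝ (Fin d))) := Prod.borelSpace
      apply Measurable.aestronglyMeasurable
      refine Measurable.mul (Measurable.mul ?_ ?_) ?_
      · exact Complex.measurable_ofReal.comp (Stmt15.measurable_sinc.comp
          ((continuous_snd.fst.inner continuous_snd.snd).measurable))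
      · apply Continuous.measurable
        have : Continuous fun p : (EuclideanSpace ℝ (Fin d) × EuclideanSpace ℝ (Fin d)) ×
            (EuclideanSpace ℝ (Fin d) × EuclideanSpace ℝ (Fin d)) =>
            Real.exp (-π * ‖p.2.1 - z.1‖ ^ 2) * Real.exp (-π * ‖p.2.2 - z.2‖ ^ 2) := by
          fun_prop
        exact Complex.continuous_ofReal.comp this
      · apply Continuous.measurable
        apply Complex.continuous_exp.comp
        have h1 : Continuous fun p : (EuclideanSpace ℝ (Fin d) × EuclideanSpace ℝ (Fin d)) ×
            (EuclideanSpace ℝ (Fin d) × EuclideanSpace ℝ (Fin d)) =>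
            (⟪p.2.1, p.1.1⟫ : ℝ) := continuous_snd.fst.inner continuous_fst.fst
        have h2 : Continuous fun p : (EuclideanSpace ℝ (Fin d) × EuclideanSpace ℝ (Fin d)) ×
            (EuclideanSpace ℝ (Fin d) × EuclideanSpace ℝ (Fin d)) =>
            (⟪p.2.2, p.1.2⟫ : ℝ) := continuous_snd.snd.inner continuous_fst.snd
        fun_prop
    exact hF.integral_prod_right'
  have key : ∀ ζ : EuclideanSpace ℝ (Fin d) × EuclideanSpace ℝ (Fin d),
      ‖∫ y : EuclideanSpace ℝ (Fin d) × EuclideanSpace ℝ (Fin d),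
          (_root_.sinc ⟪y.1, y.2⟫ : ℂ) *
            ((Real.exp (-π * ‖y.1 - z.1‖ ^ 2) * Real.exp (-π * ‖y.2 - z.2‖ ^ 2) : ℝ) : ℂ) *
            Complex.exp (-2 * π * Complex.I * ((⟪y.1, ζ.1⟫ + ⟪y.2, ζ.2⟫ : ℝ) : ℂ))‖
        ≤ ∫ t in Set.Ioc (-(1/2) : ℝ) (1/2),
            ∏ j, Stmt15.nK t (z.1 j) (z.2 j) (ζ.1 j) (ζ.2 j) := by
    intro ζ
    rw [Stmt15.inner_rep z ζ]
    refine (norm_integral_le_integral_norm _).trans (le_of_eq ?_)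
    refine MeasureTheory.integral_congr_ae (Filter.Eventually.of_forall fun t => ?_)
    dsimp only
    rw [Stmt15.chirp_eq t z ζ, norm_prod]
    exact Finset.prod_congr rfl fun j _ => Stmt15.norm_Kc _ _ _ _ _
  rw [MeasureTheory.integral_eq_lintegral_of_nonneg_ae
    (Filter.Eventually.of_forall fun ζ => norm_nonneg _) hsm.norm]
  refine ENNReal.toReal_le_of_le_ofReal (by positivity) ?_
  have step1 : (∫⁻ ζ : EuclideanSpace ℝ (Fin d) × EuclideanSpace ℝ (Fin d),
      ENNReal.ofReal ‖∫ y : EuclideanSpace ℝ (Fin d) × EuclideanSpace ℝ (Fin d),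
          (_root_.sinc ⟪y.1, y.2⟫ : ℂ) *
            ((Real.exp (-π * ‖y.1 - z.1‖ ^ 2) * Real.exp (-π * ‖y.2 - z.2‖ ^ 2) : ℝ) : ℂ) *
            Complex.exp (-2 * π * Complex.I * ((⟪y.1, ζ.1⟫ + ⟪y.2, ζ.2⟫ : ℝ) : ℂ))‖)
      ≤ ∫⁻ ζ : EuclideanSpace ℝ (Fin d) × EuclideanSpace ℝ (Fin d),
          ∫⁻ t in Set.Ioc (-(1/2) : ℝ) (1/2),
            ENNReal.ofReal (∏ j, Stmt15.nK t (z.1 j) (z.2 j) (ζ.1 j) (ζ.2 j)) := by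
    refine lintegral_mono fun ζ => ?_
    refine (ENNReal.ofReal_le_ofReal (key ζ)).trans ?_
    exact Stmt15.ofReal_int_le _ _ fun t =>
      Finset.prod_nonneg fun j _ => Stmt15.nK_nonneg _ _ _ _ _
  have step2 : (∫⁻ ζ : EuclideanSpace ℝ (Fin d) × EuclideanSpace ℝ (Fin d),
        ∫⁻ t in Set.Ioc (-(1/2) : ℝ) (1/2),
          ENNReal.ofReal (∏ j, Stmt15.nK t (z.1 j) (z.2 j) (ζ.1 j) (ζ.2 j)))
      = ∫⁻ t in Set.Ioc (-(1/2) : ℝ) (1/2),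
          ∫⁻ ζ : EuclideanSpace ℝ (Fin d) × EuclideanSpace ℝ (Fin d),
            ENNReal.ofReal (∏ j, Stmt15.nK t (z.1 j) (z.2 j) (ζ.1 j) (ζ.2 j)) := by
    apply MeasureTheory.lintegral_lintegral_swap
    apply Measurable.aemeasurable
    exact ENNReal.measurable_ofReal.comp (Stmt15.cont_nK z).measurable
  have step3 : (∫⁻ t in Set.Ioc (-(1/2) : ℝ) (1/2),
        ∫⁻ ζ : EuclideanSpace ℝ (Fin d) × EuclideanSpace ℝ (Fin d),
          ENNReal.ofReal (∏ j, Stmt15.nK t (z.1 j) (z.2 j) (ζ.1 j) (ζ.2 j)))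
      ≤ ENNReal.ofReal (2^d) := by
    have heq : ∀ t : ℝ, (∫⁻ ζ : EuclideanSpace ℝ (Fin d) × EuclideanSpace ℝ (Fin d),
        ENNReal.ofReal (∏ j, Stmt15.nK t (z.1 j) (z.2 j) (ζ.1 j) (ζ.2 j)))
        = ENNReal.ofReal ((Real.sqrt (1+t^2))^d) := by
      intro t
      rw [← MeasureTheory.ofReal_integral_eq_lintegral_ofReal (Stmt15.int_nK_integrable t z)
        (Filter.Eventually.of_forall fun ζ =>
          Finset.prod_nonneg fun j _ => Stmt15.nK_nonneg _ _ _ _ _),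
        Stmt15.int_nK t z]
    calc (∫⁻ t in Set.Ioc (-(1/2) : ℝ) (1/2),
          ∫⁻ ζ : EuclideanSpace ℝ (Fin d) × EuclideanSpace ℝ (Fin d),
            ENNReal.ofReal (∏ j, Stmt15.nK t (z.1 j) (z.2 j) (ζ.1 j) (ζ.2 j)))
        = ∫⁻ t in Set.Ioc (-(1/2) : ℝ) (1/2), ENNReal.ofReal ((Real.sqrt (1+t^2))^d) :=
          lintegral_congr fun t => heq t
      _ ≤ ∫⁻ _t in Set.Ioc (-(1/2) : ℝ) (1/2), ENNReal.ofReal ((2:ℝ)^d) := by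
          refine MeasureTheory.setLIntegral_mono' measurableSet_Ioc fun t ht => ?_
          exact ENNReal.ofReal_le_ofReal
            (pow_le_pow_left₀ (Real.sqrt_nonneg _) (Stmt15.sqrt_le_two ht) d)
      _ = ENNReal.ofReal ((2:ℝ)^d) * volume (Set.Ioc (-(1/2) : ℝ) (1/2)) :=
          MeasureTheory.setLIntegral_const _ _
      _ ≤ ENNReal.ofReal ((2:ℝ)^d) := by
          rw [Real.volume_Ioc, show ((1:ℝ)/2 - -(1/2)) = 1 by norm_num]
          simp
  exact step1.trans (step2.le.trans step3)
end
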